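/- arXiv:1901.01967 — 4 statements merged into one kernel-verified Lean document; each statement's English description precedes it below -/
import Mathlib

section
/- Let n be a positive integer and let t, s be real numbers. Then SL₂(ℤ)·u_t·a(n) = SL₂(ℤ)·v_s (where u_t is the upper unipotent matrix with entry t, v_s the lower unipotent with entry s, and a(n) = diag(n⁻¹, n)) if and only if there exists an integer j coprime to n such that t = j/n and s = j×/n where j·j× ≡ 1 mod n. Moreover, SL₂(ℤ)·u_{j/n}·a(n) ∈ SL₂(ℤ)·V whenever gcd(j,n) = 1. -/
/-!
Writing `γ = !![a, b; c, d]`, one has `γ uₜ a(y) = !![a / y, (a t + b) y; c / y, (c t + d) y]`.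
This equals `v_s` exactly when `a = y`, `b = -t y` and `c = s y`, the last entry being forced by
`det γ = 1`. For `y = n` and integral `γ`, the determinant condition `n d - b c = 1` says
precisely that `(-b) c ≡ 1 (mod n)`; conversely `j j× = 1 + n k` is realised by
`γ = !![n, -j; j×, -k]`.
-/

theorem Int.isCoprime_of_mul_modEq_one {a b n : ℤ} (h : a * b ≡ 1 [ZMOD n]) : IsCoprime a n := by
  obtain ⟨k, hk⟩ := h.dvd
  exact ⟨b, k, by linear_combination -hk⟩

theorem Int.exists_mul_modEq_one_of_isCoprime {a n : ℤ} (h : IsCoprime a n) :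
    ∃ b, a * b ≡ 1 [ZMOD n] := by
  obtain ⟨u, v, huv⟩ := h
  exact ⟨u, Int.modEq_iff_dvd.mpr ⟨v, by linear_combination -huv⟩⟩

namespace Matrix

theorem neg_mul_modEq_one_of_det_eq_one {γ : Matrix (Fin 2) (Fin 2) ℤ} (hγ : γ.det = 1) :
    -γ 0 1 * γ 1 0 ≡ 1 [ZMOD γ 0 0] := by
  rw [det_fin_two] at hγ
  exact Int.modEq_iff_dvd.mpr ⟨γ 1 1, by linear_combination -hγ⟩

theorem exists_det_eq_one_of_mul_modEq_one {n j jx : ℤ} (h : j * jx ≡ 1 [ZMOD n]) :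
    ∃ γ : Matrix (Fin 2) (Fin 2) ℤ, γ.det = 1 ∧ γ 0 0 = n ∧ γ 0 1 = -j ∧ γ 1 0 = jx := by
  obtain ⟨k, hk⟩ := h.dvd
  exact ⟨!![n, -j; jx, k], by rw [det_fin_two_of]; linear_combination -hk, rfl, rfl, rfl⟩

theorem mul_unipotent_mul_diagonal_eq_lowerUnipotent_iff {K : Type*} [Field K]
    {γ : Matrix (Fin 2) (Fin 2) K} (hγ : γ.det = 1) {t s y : K} (hy : y ≠ 0) :
    γ * (!![1, t; 0, 1] * !![y⁻¹, 0; 0, y]) = !![1, 0; s, 1] ↔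
      γ 0 0 = y ∧ γ 0 1 = -(t * y) ∧ γ 1 0 = s * y := by
  rw [det_fin_two] at hγ
  rw [γ.eta_fin_two, ← Matrix.ext_iff]
  simp only [Fin.forall_fin_two, mul_fin_two, one_mul, mul_zero, add_zero, zero_mul, zero_add,
    of_apply, cons_val', cons_val_zero, cons_val_fin_one, cons_val_one]
  constructor
  · rintro ⟨⟨ha, hb⟩, hc, -⟩
    have ha : γ 0 0 = y := (mul_inv_eq_one₀ hy).mp ha
    rw [ha] at hb
    exact ⟨ha, mul_right_cancel₀ hy (by linear_combination hb), (mul_inv_eq_iff_eq_mul₀ hy).mp hc⟩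
  · rintro ⟨ha, hb, hc⟩
    rw [ha, hb, hc] at hγ ⊢
    exact ⟨⟨mul_inv_cancel₀ hy, by ring⟩, by field_simp, by linear_combination hγ⟩

theorem intCast_mul_unipotent_mul_diagonal_eq_lowerUnipotent_iff
    {γ : Matrix (Fin 2) (Fin 2) ℤ} (hγ : γ.det = 1) {t s : ℝ} {n : ℕ} (hn : n ≠ 0) :
    γ.map ((↑) : ℤ → ℝ) * (!![1, t; 0, 1] * !![((n : ℝ))⁻¹, 0; 0, (n : ℝ)]) =
        !![1, 0; s, 1] ↔
      γ 0 0 = n ∧ (γ 0 1 : ℝ) = -(t * n) ∧ (γ 1 0 : ℝ) = s * n := by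
  have hγℝ : (γ.map ((↑) : ℤ → ℝ)).det = 1 := by rw [← Int.cast_det, hγ, Int.cast_one]
  rw [mul_unipotent_mul_diagonal_eq_lowerUnipotent_iff hγℝ (Nat.cast_ne_zero.mpr hn)]
  simp only [map_apply]
  norm_cast

theorem exists_intCast_mul_unipotent_mul_diagonal_eq_lowerUnipotent {n : ℕ} (hn : n ≠ 0)
    {j jx : ℤ} (h : j * jx ≡ 1 [ZMOD n]) :
    ∃ γ : Matrix (Fin 2) (Fin 2) ℤ, γ.det = 1 ∧
      γ.map ((↑) : ℤ → ℝ) * (!![1, (j : ℝ) / n; 0, 1] * !![((n : ℝ))⁻¹, 0; 0, (n : ℝ)]) =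
        !![1, 0; (jx : ℝ) / n, 1] := by
  obtain ⟨γ, hγ, ha, hb, hc⟩ := exists_det_eq_one_of_mul_modEq_one h
  refine ⟨γ, hγ, (intCast_mul_unipotent_mul_diagonal_eq_lowerUnipotent_iff hγ hn).mpr
    ⟨ha, ?_, ?_⟩⟩
  · rw [hb]; push_cast; field_simp
  · rw [hc]; field_simp

end Matrix

/-- For a positive integer `n` and reals `t, s`, the cosets
`SL₂(ℤ) uₜ a(n)` and `SL₂(ℤ) v_s` coincide (i.e. some integer matrix of
determinant one maps `uₜ a(n)` to `v_s`) if and only if there are integers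
`j, j×` with `gcd(j,n) = 1`, `j·j× ≡ 1 (mod n)`, `t = j/n` and `s = j×/n`.
Moreover, for any `j` coprime to `n` the point `SL₂(ℤ) u_{j/n} a(n)` lies in
`SL₂(ℤ) V`. -/
theorem stmt_0 (n : ℕ) (hn : 0 < n) (t s : ℝ) :
    ((∃ γ : Matrix (Fin 2) (Fin 2) ℤ, γ.det = 1 ∧
        γ.map ((↑) : ℤ → ℝ) * (!![1, t; 0, 1] * !![((n : ℝ))⁻¹, 0; 0, (n : ℝ)]) =
          !![1, 0; s, 1]) ↔
      (∃ j jx : ℤ, Int.gcd j (n : ℤ) = 1 ∧ j * jx ≡ 1 [ZMOD (n : ℤ)] ∧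
        t = (j : ℝ) / n ∧ s = (jx : ℝ) / n)) ∧
    (∀ j : ℤ, Int.gcd j (n : ℤ) = 1 →
      ∃ γ : Matrix (Fin 2) (Fin 2) ℤ, γ.det = 1 ∧ ∃ s' : ℝ,
        γ.map ((↑) : ℤ → ℝ) *
            (!![1, (j : ℝ) / n; 0, 1] * !![((n : ℝ))⁻¹, 0; 0, (n : ℝ)]) =
          !![1, 0; s', 1]) := by
  refine ⟨⟨?_, ?_⟩, ?_⟩
  · rintro ⟨γ, hγ, h⟩
    obtain ⟨ha, hb, hc⟩ :=
      (Matrix.intCast_mul_unipotent_mul_diagonal_eq_lowerUnipotent_iff hγ hn.ne').mp h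
    have hmod := Matrix.neg_mul_modEq_one_of_det_eq_one hγ
    rw [ha] at hmod
    refine ⟨-γ 0 1, γ 1 0, Int.isCoprime_iff_gcd_eq_one.mp (Int.isCoprime_of_mul_modEq_one hmod),
      hmod, ?_, ?_⟩
    · push_cast; rw [hb]; field_simp
    · rw [hc]; field_simp
  · rintro ⟨j, jx, -, hjx, rfl, rfl⟩
    exact Matrix.exists_intCast_mul_unipotent_mul_diagonal_eq_lowerUnipotent hn.ne' hjx
  · intro j hj
    obtain ⟨jx, hjx⟩ := Int.exists_mul_modEq_one_of_isCoprime (Int.isCoprime_iff_gcd_eq_one.mpr hj)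
    obtain ⟨γ, hγ, h⟩ :=
      Matrix.exists_intCast_mul_unipotent_mul_diagonal_eq_lowerUnipotent hn.ne' hjx
    exact ⟨γ, hγ, _, h⟩
end

section
/- Let (X, μ, T) be an invertible measure-preserving system on a probability space, let f ∈ L²(X, μ) be real-valued with ∫f dμ = E_f, and suppose there exist a constant S(f) ≥ ‖f‖₂ and a bounded, symmetric, monotonically-decreasing-on-[0,∞) function ψ: ℝ → ℝ₊ with |⟨f∘Tᵏ, f⟩ - E_f²| ≤ ψ(k)·S(f)² for all k ∈ ℤ. Then for every ς ∈ (0,1) and every K ∈ ℕ, ‖(1/K)∑_{n=0}^{K-1} f∘Tⁿ - E_f‖₂² ≤ C·(K^{-ς} + ψ(K^{1-ς}))·S(f)² for an absolute constant C. -/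
/-!
Write `c j = cov(f ∘ Tʲ, f)`. By invariance of `μ` under `T`, the square of the `L²` distance
between the ergodic average and `E_f` is the variance of the average, `K⁻² ∑_{n,m<K} c (n - m)`.
Each `c j` is at most `Var f ≤ S²`, and at most `ψ(M) S²` once `|j| > M := K^{1-ς}`, since
`ψ` is even and decreasing on `[0, ∞)`. At most `K (2M + 1) ≤ 3 K M` pairs satisfy `|n - m| ≤ M`,
so the double sum is at most `K² ψ(M) S² + 3 K M S²`; dividing by `K²` gives the bound with
`C = 3`, as `M / K = K^{-ς}`.
-/

open MeasureTheory ProbabilityTheory Finset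

section Covariance

variable {Ω Ω' : Type*} {mΩ : MeasurableSpace Ω} {mΩ' : MeasurableSpace Ω'}
  {μ : Measure Ω} {ν : Measure Ω'} {Z : Ω → Ω'}

lemma MeasureTheory.MeasurePreserving.integral_comp_of_aestronglyMeasurable {E : Type*}
    [NormedAddCommGroup E] [NormedSpace ℝ E] (hZ : MeasurePreserving Z μ ν) {g : Ω' → E}
    (hg : AEStronglyMeasurable g ν) : ∫ ω, g (Z ω) ∂μ = ∫ ω', g ω' ∂ν := by
  rw [← hZ.map_eq] at hg ⊢
  exact (integral_map hZ.aemeasurable hg).symm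

lemma MeasureTheory.MeasurePreserving.covariance_comp (hZ : MeasurePreserving Z μ ν)
    {U V : Ω' → ℝ} (hU : AEStronglyMeasurable U ν) (hV : AEStronglyMeasurable V ν) :
    cov[fun ω ↦ U (Z ω), fun ω ↦ V (Z ω); μ] = cov[U, V; ν] := by
  rw [← hZ.map_eq] at hU hV ⊢
  exact (covariance_map_fun hU hV hZ.aemeasurable).symm

lemma two_mul_abs_covariance_le [IsFiniteMeasure μ] {U V : Ω → ℝ} (hU : MemLp U 2 μ)
    (hV : MemLp V 2 μ) : 2 * |cov[U, V; μ]| ≤ Var[U; μ] + Var[V; μ] := by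
  have hadd := variance_nonneg (U + V) μ
  have hsub := variance_nonneg (U - V) μ
  rw [variance_add hU hV] at hadd
  rw [variance_sub hU hV] at hsub
  rcases abs_cases cov[U, V; μ] with ⟨h, -⟩ | ⟨h, -⟩ <;> linarith

lemma MeasureTheory.MemLp.integral_sq {f : Ω → ℝ} (hf : MemLp f 2 μ) :
    ∫ ω, f ω ^ 2 ∂μ = (eLpNorm f 2 μ).toReal ^ 2 := by
  rw [← Lp.norm_toLp f hf, ← real_inner_self_eq_norm_sq, L2.inner_def]
  refine integral_congr_ae ?_
  filter_upwards [hf.coeFn_toLp] with ω hω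
  simp [hω, sq]

lemma variance_le_sq_eLpNorm [IsProbabilityMeasure μ] {f : Ω → ℝ} (hf : MemLp f 2 μ) :
    Var[f; μ] ≤ (eLpNorm f 2 μ).toReal ^ 2 := by
  simpa [hf.integral_sq] using variance_le_expectation_sq hf.aestronglyMeasurable

end Covariance

section Perm

variable {Ω : Type*} {mΩ : MeasurableSpace Ω} {μ : Measure Ω} {T : Equiv.Perm Ω}

lemma Equiv.Perm.measurePreserving_zpow (hT : MeasurePreserving T μ μ)
    (hT' : MeasurePreserving T.symm μ μ) (k : ℤ) : MeasurePreserving ⇑(T ^ k) μ μ := by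
  cases k with
  | ofNat n => simpa [Equiv.Perm.coe_pow] using hT.iterate n
  | negSucc n =>
    rw [zpow_negSucc, ← inv_pow, Equiv.Perm.coe_pow]
    exact hT'.iterate (n + 1)

variable {f : Ω → ℝ}

lemma covariance_comp_zpow_comp_zpow (hT : ∀ k : ℤ, MeasurePreserving ⇑(T ^ k) μ μ)
    (hf : AEStronglyMeasurable f μ) (n m : ℤ) :
    cov[fun ω ↦ f ((T ^ n) ω), fun ω ↦ f ((T ^ m) ω); μ]
      = cov[fun ω ↦ f ((T ^ (n - m)) ω), f; μ] := by
  have hfnm : AEStronglyMeasurable (fun ω ↦ f ((T ^ (n - m)) ω)) μ :=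
    hf.comp_measurePreserving (hT (n - m))
  rw [← (hT m).covariance_comp hfnm hf]
  simp [← Equiv.Perm.mul_apply, ← zpow_add]

lemma covariance_comp_zpow_eq [IsProbabilityMeasure μ]
    (hT : ∀ k : ℤ, MeasurePreserving ⇑(T ^ k) μ μ)
    (hf : MemLp f 2 μ) (k : ℤ) :
    cov[fun ω ↦ f ((T ^ k) ω), f; μ] = ∫ ω, f ((T ^ k) ω) * f ω ∂μ - (∫ ω, f ω ∂μ) ^ 2 := by
  have hfk : MemLp (fun ω ↦ f ((T ^ k) ω)) 2 μ := hf.comp_measurePreserving (hT k)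
  rw [covariance_eq_sub hfk hf,
    (hT k).integral_comp_of_aestronglyMeasurable hf.aestronglyMeasurable, sq]
  rfl

lemma covariance_comp_zpow_le [IsProbabilityMeasure μ]
    (hT : ∀ k : ℤ, MeasurePreserving ⇑(T ^ k) μ μ)
    (hf : MemLp f 2 μ) (k : ℤ) :
    cov[fun ω ↦ f ((T ^ k) ω), f; μ] ≤ (eLpNorm f 2 μ).toReal ^ 2 := by
  have hfk : MemLp (fun ω ↦ f ((T ^ k) ω)) 2 μ := hf.comp_measurePreserving (hT k)
  have hvar : Var[fun ω ↦ f ((T ^ k) ω); μ] = Var[f; μ] := by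
    rw [← covariance_self hfk.aemeasurable,
      ← covariance_self hf.aemeasurable,
      (hT k).covariance_comp hf.aestronglyMeasurable hf.aestronglyMeasurable]
  have := two_mul_abs_covariance_le hfk hf
  linarith [le_abs_self cov[fun ω ↦ f ((T ^ k) ω), f; μ], variance_le_sq_eLpNorm hf]

lemma integral_sq_average_sub_eq [IsProbabilityMeasure μ]
    (hT : ∀ k : ℤ, MeasurePreserving ⇑(T ^ k) μ μ)
    (hf : MemLp f 2 μ) {K : ℕ} (hK : K ≠ 0) :
    ∫ ω, ((∑ n ∈ range K, f ((T ^ n) ω)) / K - ∫ ω, f ω ∂μ) ^ 2 ∂μ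
      = (∑ n ∈ range K, ∑ m ∈ range K, cov[fun ω ↦ f ((T ^ ((n : ℤ) - m)) ω), f; μ])
          / K ^ 2 := by
  have hfn (n : ℕ) : MemLp (fun ω ↦ f ((T ^ n) ω)) 2 μ := by
    rw [← zpow_natCast]
    exact hf.comp_measurePreserving (hT n)
  set A : Ω → ℝ := fun ω ↦ (∑ n ∈ range K, f ((T ^ n) ω)) / K
  have hA : μ[A] = ∫ ω, f ω ∂μ := by
    have hmean (n : ℕ) : ∫ ω, f ((T ^ n) ω) ∂μ = ∫ ω, f ω ∂μ := by
      simpa using (hT n).integral_comp_of_aestronglyMeasurable hf.aestronglyMeasurable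
    rw [integral_div, integral_finsetSum _ fun n _ ↦ (hfn n).integrable one_le_two]
    simp only [hmean, sum_const, card_range, nsmul_eq_mul]
    field_simp
  calc _ = cov[A, A; μ] := by
        have hAm : AEMeasurable A μ :=
          (memLp_finsetSum _ fun n _ ↦ hfn n).aemeasurable.div_const _
        rw [covariance_self hAm, variance_eq_integral hAm, hA]
    _ = _ := by
        rw [covariance_fun_div_left, covariance_fun_div_right,
          covariance_fun_sum_fun_sum' (fun n _ ↦ hfn n) (fun n _ ↦ hfn n), div_div, ← sq]
        congr 1
        refine sum_congr rfl fun n _ ↦ sum_congr rfl fun m _ ↦ ?_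
        simpa using covariance_comp_zpow_comp_zpow hT hf.aestronglyMeasurable n m

end Perm

lemma card_filter_abs_sub_le (s : Finset ℕ) (n : ℕ) {M : ℝ} (hM : 0 ≤ M) :
    (#{m ∈ s | |(n : ℝ) - (m : ℕ)| ≤ M} : ℝ) ≤ 2 * M + 1 := by
  set d := ⌊M⌋₊
  have hsub : {m ∈ s | |(n : ℝ) - (m : ℕ)| ≤ M} ⊆ Icc (n - d) (n + d) := by
    intro m hm
    have : ((n : ℤ) - m).natAbs ≤ d :=
      Nat.le_floor (by rw [Nat.cast_natAbs]; push_cast; exact (mem_filter.1 hm).2)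
    rw [mem_Icc]
    omega
  calc (#{m ∈ s | |(n : ℝ) - (m : ℕ)| ≤ M} : ℝ) ≤ #(Icc (n - d) (n + d)) := by
        exact_mod_cast card_le_card hsub
    _ ≤ 2 * d + 1 := by
        rw [Nat.card_Icc]
        norm_cast
        omega
    _ ≤ 2 * M + 1 := by linarith [Nat.floor_le hM]

lemma sum_range_sum_range_sub_le {c : ℤ → ℝ} {A b M : ℝ} (K : ℕ) (hA : 0 ≤ A) (hb : 0 ≤ b)
    (hM : 0 ≤ M) (hc : ∀ j, c j ≤ A) (hfar : ∀ j : ℤ, M < |(j : ℝ)| → c j ≤ b) :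
    ∑ n ∈ range K, ∑ m ∈ range K, c (n - m) ≤ K * (K * b + (2 * M + 1) * A) := by
  have hterm (n m : ℕ) : c (n - m) ≤ b + if |(n : ℝ) - m| ≤ M then A else 0 := by
    split_ifs with h
    · linarith [hc (n - m)]
    · simpa using hfar (n - m) (by push_cast; linarith)
  have hrow (n : ℕ) : ∑ m ∈ range K, c (n - m) ≤ K * b + (2 * M + 1) * A :=
    calc _ ≤ ∑ m ∈ range K, (b + if |(n : ℝ) - m| ≤ M then A else 0) :=
          sum_le_sum fun m _ ↦ hterm n m
      _ = K * b + #{m ∈ range K | |(n : ℝ) - (m : ℕ)| ≤ M} * A := by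
          rw [sum_add_distrib, sum_ite, sum_const_zero, add_zero]
          simp
      _ ≤ _ := by gcongr; exact card_filter_abs_sub_le _ n hM
  calc _ ≤ ∑ n ∈ range K, (K * b + (2 * M + 1) * A) := sum_le_sum fun n _ ↦ hrow n
    _ = _ := by rw [sum_const, card_range, nsmul_eq_mul]

lemma AntitoneOn.apply_le_of_le_abs {ψ : ℝ → ℝ} (hψ : AntitoneOn ψ (Set.Ici 0))
    (heven : ∀ x, ψ (-x) = ψ x) {M x : ℝ} (hM : 0 ≤ M) (hx : M ≤ |x|) : ψ x ≤ ψ M := by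
  have habs : ψ |x| = ψ x := by
    rcases abs_choice x with h | h <;> rw [h]
    exact heven x
  rw [← habs]
  exact hψ hM (hM.trans hx) hx

/-- effective von Neumann ergodic theorem. There is an absolute
constant `C > 0` such that: for every invertible measure-preserving system
`(X, μ, T)` on a probability space, every real-valued `f ∈ L²(μ)` with mean
`E_f = ∫ f`, every `S ≥ ‖f‖₂` and every bounded, symmetric `ψ : ℝ → ℝ₊`
monotone decreasing on `[0,∞)` satisfying
`|⟨f∘Tᵏ, f⟩ - E_f²| ≤ ψ(k)·S²` for all `k ∈ ℤ`, one has, for every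
`ς ∈ (0,1)` and `K ≥ 1`,
`‖(1/K)∑_{n<K} f∘Tⁿ - E_f‖₂² ≤ C·(K^{-ς} + ψ(K^{1-ς}))·S²`. -/
theorem stmt_2 :
    ∃ C : ℝ, 0 < C ∧
      ∀ (X : Type) (_ : MeasurableSpace X) (μ : Measure X),
        IsProbabilityMeasure μ →
        ∀ T : Equiv.Perm X,
          MeasurePreserving T μ μ → MeasurePreserving T.symm μ μ →
        ∀ f : X → ℝ, MemLp f 2 μ →
        ∀ S : ℝ, (eLpNorm f 2 μ).toReal ≤ S →
        ∀ ψ : ℝ → ℝ,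
          (∀ x, 0 ≤ ψ x) → (∃ B, ∀ x, ψ x ≤ B) → (∀ x, ψ (-x) = ψ x) →
          AntitoneOn ψ (Set.Ici 0) →
          (∀ k : ℤ,
            |(∫ x, f ((T ^ k) x) * f x ∂μ) - (∫ x, f x ∂μ) ^ 2| ≤
              ψ (k : ℝ) * S ^ 2) →
        ∀ ς : ℝ, 0 < ς → ς < 1 → ∀ K : ℕ, 1 ≤ K →
          (∫ x, ((∑ n ∈ Finset.range K, f ((T ^ n) x)) / (K : ℝ)
              - ∫ x, f x ∂μ) ^ 2 ∂μ) ≤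
            C * ((K : ℝ) ^ (-ς) + ψ ((K : ℝ) ^ ((1 : ℝ) - ς))) * S ^ 2 := by
  refine ⟨3, by norm_num, ?_⟩
  intro X _ μ _ T hT hT' f hf S hS ψ hψ0 _ hψeven hψanti hcorr ς _ hς1 K hK
  have hTk := Equiv.Perm.measurePreserving_zpow hT hT'
  set M : ℝ := (K : ℝ) ^ ((1 : ℝ) - ς)
  have hM : 1 ≤ M := Real.one_le_rpow (by exact_mod_cast hK) (by linarith)
  have hK0 : (0 : ℝ) < K := by exact_mod_cast hK
  have hKM : (K : ℝ) ^ (-ς) * K = M := by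
    rw [← Real.rpow_add_one hK0.ne', neg_add_eq_sub]
  have hc_le (j : ℤ) : cov[fun x ↦ f ((T ^ j) x), f; μ] ≤ S ^ 2 :=
    (covariance_comp_zpow_le hTk hf j).trans (pow_le_pow_left₀ ENNReal.toReal_nonneg hS 2)
  have hc_far (j : ℤ) (hj : M < |(j : ℝ)|) : cov[fun x ↦ f ((T ^ j) x), f; μ] ≤ ψ M * S ^ 2 :=
    calc _ ≤ ψ j * S ^ 2 := by
          rw [covariance_comp_zpow_eq hTk hf]
          exact (le_abs_self _).trans (hcorr j)
      _ ≤ ψ M * S ^ 2 := by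
          gcongr
          exact hψanti.apply_le_of_le_abs hψeven (by linarith) hj.le
  rw [integral_sq_average_sub_eq hTk hf (by omega), div_le_iff₀ (by positivity)]
  calc _ ≤ K * (K * (ψ M * S ^ 2) + (2 * M + 1) * S ^ 2) :=
        sum_range_sum_range_sub_le K (sq_nonneg S) (mul_nonneg (hψ0 M) (sq_nonneg S)) (by linarith)
          hc_le hc_far
    _ ≤ 3 * ((K : ℝ) ^ (-ς) * K * K + ψ M * K ^ 2) * S ^ 2 := by
        rw [hKM]
        have hψS : 0 ≤ ψ M * S ^ 2 * K ^ 2 := by have := hψ0 M; positivity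
        have hMS : 0 ≤ (M - 1) * K * S ^ 2 := by have := sub_nonneg.2 hM; positivity
        linarith
    _ = _ := by ring
end

section
/- Let 𝔬 be the ring of integers of a number field and let ε > 0. Then for all nonzero ideals I ⊆ 𝔬 with N(I) sufficiently large, one has N(I)^{1-ε} < φ(I) < N(I), where φ(I) = |(𝔬/I)^×|. -/
/-!
The totient is multiplicative along the factorisation `I = ∏ P ^ e` (Chinese remainder theorem),
and `φ(P ^ e) = N(P ^ e) (1 - N(P)⁻¹)` because the non-units of `𝔬 ⧸ P ^ e` are exactly `P ⧸ P ^ e`.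
For `δ > 0`, `N(P ^ e) (1 - N(P)⁻¹) ≥ N(P ^ e) ^ (1 - δ) · N(P) ^ δ (1 - N(P)⁻¹)`, and the last
factor is `≥ 1` once `N(P)` is large and `≥ 1/2` always. As only finitely many ideals have small
norm, this gives `φ(I) ≥ c · N(I) ^ (1 - δ)` with `c > 0` depending only on `δ`; take `δ = ε / 2`.
The upper bound is just that `0` is not a unit of the nontrivial ring `𝔬 ⧸ I`.
-/

open NumberField UniqueFactorizationMonoid Filter

theorem Ideal.card_units_quotient_pow_eq {S : Type*} [CommRing S] (P : Ideal S) [P.IsMaximal]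
    {n : ℕ} (hn : n ≠ 0) [Finite (S ⧸ P ^ n)] :
    (Nat.card (S ⧸ P ^ n)ˣ : ℝ) = Nat.card (S ⧸ P ^ n) * (1 - (Nat.card (S ⧸ P) : ℝ)⁻¹) := by
  have hle : P ^ n ≤ P := Ideal.pow_le_self hn
  set M : Set (S ⧸ P ^ n) := ↑(Submodule.map (P ^ n).mkQ P)
  have hM : M = P.map (Quotient.mk (P ^ n)) := by
    simp only [M, Ideal.map_eq_submodule_map]; rfl
  have hunits : Set.range ((↑) : (S ⧸ P ^ n)ˣ → S ⧸ P ^ n) = Mᶜ := by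
    ext z
    obtain ⟨x, rfl⟩ := Ideal.Quotient.mk_surjective z
    rw [hM]
    exact (Quotient.isUnit_mk_pow_iff_notMem P hn).trans (mem_quotient_iff_mem hle).not.symm
  have hsum : Nat.card (S ⧸ P ^ n)ˣ + Nat.card M = Nat.card (S ⧸ P ^ n) := by
    rw [Nat.card_congr (Equiv.ofInjective _ Units.val_injective), hunits, add_comm,
      Nat.card_coe_set_eq, Nat.card_coe_set_eq]
    exact Set.ncard_add_ncard_compl _
  have hprod : Nat.card M * Nat.card (S ⧸ P) = Nat.card (S ⧸ P ^ n) :=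
    Submodule.card_quotient_mul_card_quotient P (P ^ n) hle
  have hP0 : (Nat.card (S ⧸ P) : ℝ) ≠ 0 := by
    have : Finite (S ⧸ P) := Finite.of_surjective _ (Quotient.factor_surjective hle)
    exact_mod_cast Nat.card_pos.ne'
  have hunits_card : (Nat.card (S ⧸ P ^ n)ˣ : ℝ) = Nat.card (S ⧸ P ^ n) - Nat.card M := by
    rw [← hsum]; push_cast; ring
  rw [hunits_card, ← hprod]
  push_cast
  field_simp

section DedekindDomain

variable {R : Type*} [CommRing R] [IsDedekindDomain R] {I : Ideal R}

theorem Ideal.prod_factors_pow_count (hI : I ≠ ⊥) :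
    ∏ P ∈ (factors I).toFinset, P ^ (factors I).count P = I :=
  (Finset.prod_multiset_count (factors I)).symm.trans (associated_iff_eq.mp (factors_prod hI))

theorem Ideal.card_units_quotient_eq_prod (hI : I ≠ ⊥) :
    Nat.card (R ⧸ I)ˣ = ∏ P ∈ (factors I).toFinset, Nat.card (R ⧸ P ^ (factors I).count P)ˣ := by
  rw [Nat.card_congr (Units.mapEquiv (IsDedekindDomain.quotientEquivPiFactors hI).toMulEquiv
    |>.trans MulEquiv.piUnits).toEquiv, Nat.card_pi]
  exact Finset.prod_coe_sort _ fun P => Nat.card (R ⧸ P ^ (factors I).count P)ˣ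

end DedekindDomain

theorem rpow_mul_rpow_mul_one_sub_inv_le {δ q m : ℝ} (hδ : 0 ≤ δ) (hq : 1 ≤ q) (hqm : q ≤ m) :
    m ^ (1 - δ) * (q ^ δ * (1 - q⁻¹)) ≤ m * (1 - q⁻¹) := by
  have hm : 0 < m := by linarith
  calc m ^ (1 - δ) * (q ^ δ * (1 - q⁻¹))
      ≤ m ^ (1 - δ) * (m ^ δ * (1 - q⁻¹)) := by
        gcongr
        exact sub_nonneg.mpr (inv_le_one_of_one_le₀ hq)
    _ = m * (1 - q⁻¹) := by
        rw [← mul_assoc, ← Real.rpow_add hm, sub_add_cancel, Real.rpow_one]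

theorem inv_two_le_rpow_mul_one_sub_inv {δ q : ℝ} (hδ : 0 ≤ δ) (hq : 2 ≤ q) :
    2⁻¹ ≤ q ^ δ * (1 - q⁻¹) := by
  have h1 : 1 ≤ q ^ δ := Real.one_le_rpow (by linarith) hδ
  have h2 : q⁻¹ ≤ 2⁻¹ := inv_anti₀ two_pos hq
  nlinarith

theorem eventually_one_le_rpow_mul_one_sub_inv {δ : ℝ} (hδ : 0 < δ) :
    ∀ᶠ x : ℝ in atTop, 1 ≤ x ^ δ * (1 - x⁻¹) := by
  have hlim : Tendsto (fun x : ℝ => 1 - x⁻¹) atTop (nhds 1) := by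
    simpa using tendsto_inv_atTop_zero.const_sub (1 : ℝ)
  exact ((tendsto_rpow_atTop hδ).atTop_mul_pos one_pos hlim).eventually_ge_atTop 1

theorem Finset.pow_card_filter_le_prod {ι R : Type*} [CommSemiring R] [PartialOrder R]
    [IsOrderedRing R] (s : Finset ι) (p : ι → Prop) [DecidablePred p] {a : R} (ha : 0 ≤ a)
    {f : ι → R} (hp : ∀ i ∈ s, p i → a ≤ f i) (hnp : ∀ i ∈ s, ¬ p i → 1 ≤ f i) :
    a ^ (s.filter p).card ≤ ∏ i ∈ s, f i := by
  calc a ^ (s.filter p).card = ∏ i ∈ s, if p i then a else 1 := by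
        rw [Finset.prod_ite, Finset.prod_const, Finset.prod_const_one, mul_one]
    _ ≤ ∏ i ∈ s, f i := by
        refine Finset.prod_le_prod (fun i _ => by split_ifs <;> simp [ha]) fun i hi => ?_
        split_ifs with h
        exacts [hp i hi h, hnp i hi h]

section AbsNorm

variable {S : Type*} [CommRing S] [IsDedekindDomain S] [Module.Free ℤ S] [Module.Finite ℤ S]

theorem Ideal.two_le_absNorm_of_prime {P : Ideal S} (hP : Prime P) : 2 ≤ absNorm P := by
  have h0 : absNorm P ≠ 0 :=
    absNorm_ne_zero_of_nonZeroDivisors ⟨P, mem_nonZeroDivisors_of_ne_zero hP.ne_zero⟩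
  have h1 : absNorm P ≠ 1 := fun h => (isPrime_of_prime hP).ne_top (absNorm_eq_one_iff.mp h)
  omega

theorem Ideal.card_units_quotient_prime_pow_eq {P : Ideal S} (hP : Prime P) {e : ℕ} (he : e ≠ 0) :
    (Nat.card (S ⧸ P ^ e)ˣ : ℝ) = absNorm (P ^ e) * (1 - (absNorm P : ℝ)⁻¹) := by
  have : P.IsMaximal := (isPrime_of_prime hP).isMaximal hP.ne_zero
  have : Finite (S ⧸ P ^ e) := finiteQuotientOfFreeOfNeBot _ (pow_ne_zero e hP.ne_zero)
  exact card_units_quotient_pow_eq P he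

theorem Ideal.rpow_absNorm_mul_prod_le_card_units {δ : ℝ} (hδ : 0 ≤ δ) {I : Ideal S} (hI : I ≠ ⊥) :
    (absNorm I : ℝ) ^ (1 - δ) *
        ∏ P ∈ (factors I).toFinset, ((absNorm P : ℝ) ^ δ * (1 - (absNorm P : ℝ)⁻¹)) ≤
      Nat.card (S ⧸ I)ˣ := by
  have hN : (absNorm I : ℝ) =
      ∏ P ∈ (factors I).toFinset, (absNorm (P ^ (factors I).count P) : ℝ) := by
    conv_lhs => rw [← prod_factors_pow_count hI]
    rw [map_prod, Nat.cast_prod]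
  rw [hN, ← Real.finsetProd_rpow _ _ (fun _ _ => Nat.cast_nonneg _), ← Finset.prod_mul_distrib,
    card_units_quotient_eq_prod hI, Nat.cast_prod]
  refine Finset.prod_le_prod (fun P hP => ?_) fun P hP => ?_
  all_goals
    have hPrime := prime_of_factor P (Multiset.mem_toFinset.mp hP)
    have h2 : (2 : ℝ) ≤ absNorm P := by exact_mod_cast two_le_absNorm_of_prime hPrime
  · have := inv_two_le_rpow_mul_one_sub_inv hδ h2
    exact mul_nonneg (by positivity) (by linarith)
  have he := Multiset.count_ne_zero.mpr (Multiset.mem_toFinset.mp hP)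
  rw [card_units_quotient_prime_pow_eq hPrime he]
  refine rpow_mul_rpow_mul_one_sub_inv_le hδ (by linarith) ?_
  rw [map_pow]
  exact_mod_cast Nat.le_self_pow he _

theorem Ideal.inv_two_pow_mul_rpow_absNorm_le_card_units [CharZero S] {δ : ℝ} (hδ : 0 ≤ δ)
    {T : ℕ} (hT : ∀ q : ℕ, T ≤ q → 1 ≤ (q : ℝ) ^ δ * (1 - (q : ℝ)⁻¹)) {I : Ideal S} (hI : I ≠ ⊥) :
    2⁻¹ ^ {J : Ideal S | absNorm J < T}.ncard * (absNorm I : ℝ) ^ (1 - δ) ≤ Nat.card (S ⧸ I)ˣ := by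
  classical
  refine le_trans ?_ (rpow_absNorm_mul_prod_le_card_units hδ hI)
  rw [mul_comm]
  gcongr
  set small := (factors I).toFinset.filter (absNorm · < T)
  have hsmall : small.card ≤ {J : Ideal S | absNorm J < T}.ncard := by
    rw [← Set.ncard_coe_finset]
    refine Set.ncard_le_ncard (fun P hP => (Finset.mem_filter.mp hP).2) ?_
    exact (finite_setOfPred_absNorm_le T).subset fun J (hJ : absNorm J < T) => hJ.le
  calc (2⁻¹ : ℝ) ^ {J : Ideal S | absNorm J < T}.ncard ≤ 2⁻¹ ^ small.card :=
        pow_le_pow_of_le_one (by norm_num) (by norm_num) hsmall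
    _ ≤ _ := by
        refine Finset.pow_card_filter_le_prod _ _ (by norm_num) (fun P hP _ => ?_)
          fun P _ hPT => hT _ (not_lt.mp hPT)
        have hPrime := prime_of_factor P (Multiset.mem_toFinset.mp hP)
        exact inv_two_le_rpow_mul_one_sub_inv hδ (by exact_mod_cast two_le_absNorm_of_prime hPrime)

end AbsNorm

/-- Let `𝔬` be the ring of integers of a number field and
`ε > 0`. Then for all nonzero ideals `I ⊆ 𝔬` of sufficiently large norm,
`N(I)^{1-ε} < φ(I) < N(I)`, where `φ(I) = |(𝔬/I)ˣ|`. -/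
theorem stmt_8 (K : Type) [Field K] [NumberField K] (ε : ℝ) (hε : 0 < ε) :
    ∃ N₀ : ℕ, ∀ I : Ideal (𝓞 K), I ≠ ⊥ → N₀ ≤ Ideal.absNorm I →
      (Ideal.absNorm I : ℝ) ^ ((1 : ℝ) - ε) < (Nat.card ((𝓞 K ⧸ I)ˣ) : ℝ) ∧
      (Nat.card ((𝓞 K ⧸ I)ˣ) : ℝ) < (Ideal.absNorm I : ℝ) := by
  have hδ : 0 < ε / 2 := half_pos hε
  obtain ⟨T, hT⟩ := eventually_atTop.mp
    (tendsto_natCast_atTop_atTop.eventually (eventually_one_le_rpow_mul_one_sub_inv hδ))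
  set C := {J : Ideal (𝓞 K) | Ideal.absNorm J < T}.ncard
  obtain ⟨N₀, hN₀⟩ := eventually_atTop.mp <| (eventually_ge_atTop 2).and <|
    tendsto_natCast_atTop_atTop.eventually ((tendsto_rpow_atTop hδ).eventually_gt_atTop (2 ^ C))
  refine ⟨N₀, fun I hI hN => ?_⟩
  obtain ⟨hN2, hNC⟩ := hN₀ _ hN
  set N := Ideal.absNorm I
  have hNpos : (0 : ℝ) < N := by positivity
  constructor
  · calc (N : ℝ) ^ (1 - ε) = (N : ℝ) ^ (-(ε / 2)) * (N : ℝ) ^ (1 - ε / 2) := by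
          rw [← Real.rpow_add hNpos]; ring_nf
      _ < 2⁻¹ ^ C * (N : ℝ) ^ (1 - ε / 2) := by
          gcongr
          rw [Real.rpow_neg hNpos.le, inv_pow]
          exact inv_strictAnti₀ (by positivity) hNC
      _ ≤ _ := Ideal.inv_two_pow_mul_rpow_absNorm_le_card_units hδ.le hT hI
  · have : Finite (𝓞 K ⧸ I) := Ideal.finiteQuotientOfFreeOfNeBot I hI
    have : Nontrivial (𝓞 K ⧸ I) :=
      Ideal.Quotient.nontrivial_iff.mpr fun h => by simp [N, h] at hN2
    exact_mod_cast natCard_units_lt (𝓞 K ⧸ I)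
end

section
/- Let 𝔬 be the ring of integers of a number field of degree d, and let y ∈ 𝔬 be nonzero. Then φ(y)/|N(y)| ≥ ζ(2)^{-d}⋯ζ(d)^{-d} · ∏_{p prime, p ≤ |N(y)|} ((p-1)/p)^d, where the product is over rational primes and ζ is the Riemann zeta function. -/
/-!
Writing `I = ∏ 𝔭 ^ e𝔭`, the Chinese remainder theorem gives `φ(I) / N(I) = ∏ (1 - 1 / N𝔭)`,
because the nonunits of `𝓞 ⧸ 𝔭 ^ e` are exactly `𝔭 / 𝔭 ^ e`. Each `N𝔭` is a power of the
residue characteristic `p ∣ N(I)`, so `1 - 1 / N𝔭 ≥ 1 - 1 / p`, and at most `d` of the `𝔭 ∣ I`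
lie over a given `p`: they are pairwise coprime divisors of `p𝓞`, so the product of their norms,
each divisible by `p`, divides `N(p𝓞) = p ^ d`. The zeta factor is at most `1`.
-/

open NumberField Ideal UniqueFactorizationMonoid Module

theorem Ideal.card_units_quotient_pow_add_card_map {R : Type*} [CommRing R] (P : Ideal R)
    [P.IsMaximal] {e : ℕ} (he : e ≠ 0) [Finite (R ⧸ P ^ e)] :
    Nat.card (R ⧸ P ^ e)ˣ + Nat.card (P.map (Ideal.Quotient.mk (P ^ e))) =
      Nat.card (R ⧸ P ^ e) := by
  have hunits : Set.range (Units.val : (R ⧸ P ^ e)ˣ → R ⧸ P ^ e) =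
      ((P.map (Ideal.Quotient.mk (P ^ e)) : Set (R ⧸ P ^ e)))ᶜ := by
    ext x
    obtain ⟨r, rfl⟩ := Ideal.Quotient.mk_surjective x
    exact (Ideal.Quotient.isUnit_mk_pow_iff_notMem P he).trans
      (mem_quotient_iff_mem (pow_le_self he)).not.symm
  rw [← Nat.card_range_of_injective Units.val_injective, hunits, Nat.card_coe_set_eq,
    ← SetLike.coe_sort_coe, Nat.card_coe_set_eq, add_comm]
  exact Set.ncard_add_ncard_compl _

theorem Ideal.card_units_quotient_pow_div_card {R : Type*} [CommRing R] (P : Ideal R)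
    [P.IsMaximal] {e : ℕ} (he : e ≠ 0) [Finite (R ⧸ P ^ e)] :
    (Nat.card (R ⧸ P ^ e)ˣ : ℝ) / Nat.card (R ⧸ P ^ e) =
      ((Nat.card (R ⧸ P) : ℝ) - 1) / Nat.card (R ⧸ P) := by
  have hsum := P.card_units_quotient_pow_add_card_map he
  have hmul : Nat.card (P.map (Ideal.Quotient.mk (P ^ e))) * Nat.card (R ⧸ P) =
      Nat.card (R ⧸ P ^ e) := by
    rw [map_eq_submodule_map]
    exact Submodule.card_quotient_mul_card_quotient P (P ^ e) (pow_le_self he)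
  have hcard : Nat.card (R ⧸ P ^ e) ≠ 0 := Nat.card_ne_zero.mpr ⟨inferInstance, inferInstance⟩
  have hres : Nat.card (R ⧸ P) ≠ 0 := fun h => hcard (by rw [← hmul, h, mul_zero])
  rw [div_eq_div_iff (by exact_mod_cast hcard) (by exact_mod_cast hres)]
  have hsumR : (Nat.card (R ⧸ P ^ e)ˣ : ℝ) + Nat.card (P.map (Ideal.Quotient.mk (P ^ e))) =
      Nat.card (R ⧸ P ^ e) := by exact_mod_cast hsum
  have hmulR : (Nat.card (P.map (Ideal.Quotient.mk (P ^ e))) : ℝ) * Nat.card (R ⧸ P) =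
      Nat.card (R ⧸ P ^ e) := by exact_mod_cast hmul
  linear_combination (Nat.card (R ⧸ P) : ℝ) * hsumR - hmulR

section Dedekind

variable {R : Type*} [CommRing R] [IsDedekindDomain R]

theorem IsDedekindDomain.card_quotient_eq_prod_factors {I : Ideal R} (hI : I ≠ ⊥) :
    Nat.card (R ⧸ I) = ∏ P ∈ (factors I).toFinset, Nat.card (R ⧸ P ^ (factors I).count P) := by
  rw [Nat.card_congr (quotientEquivPiFactors hI).toEquiv, Nat.card_pi,
    Finset.prod_coe_sort _ (fun P => Nat.card (R ⧸ P ^ (factors I).count P))]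

theorem IsDedekindDomain.card_units_quotient_eq_prod_factors {I : Ideal R} (hI : I ≠ ⊥) :
    Nat.card (R ⧸ I)ˣ = ∏ P ∈ (factors I).toFinset, Nat.card (R ⧸ P ^ (factors I).count P)ˣ := by
  rw [Nat.card_congr
      ((Units.mapEquiv (quotientEquivPiFactors hI).toMulEquiv).trans MulEquiv.piUnits).toEquiv,
    Nat.card_pi, Finset.prod_coe_sort _ (fun P => Nat.card (R ⧸ P ^ (factors I).count P)ˣ)]

theorem IsDedekindDomain.isMaximal_of_mem_factors {I P : Ideal R} (hP : P ∈ factors I) :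
    P.IsMaximal :=
  have hprime := prime_of_factor P hP
  (isPrime_of_prime hprime).isMaximal hprime.ne_zero

end Dedekind

theorem sub_one_div_self_le_sub_one_div_self {a b : ℝ} (ha : 0 < a) (hab : a ≤ b) :
    (a - 1) / a ≤ (b - 1) / b := by
  rw [sub_div, sub_div, div_self ha.ne', div_self (ha.trans_le hab).ne']
  exact sub_le_sub_left (one_div_le_one_div_of_le ha hab) 1

theorem sub_one_div_self_nonneg {a : ℝ} (ha : 1 ≤ a) : 0 ≤ (a - 1) / a :=
  div_nonneg (sub_nonneg.mpr ha) (zero_le_one.trans ha)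

theorem sub_one_div_self_le_one {a : ℝ} (ha : 0 ≤ a) : (a - 1) / a ≤ 1 :=
  div_le_one_of_le₀ (sub_le_self a zero_le_one) ha

theorem Ideal.Quotient.natCast_eq_zero_iff_mem {R : Type*} [CommRing R] {I : Ideal R} {n : ℕ} :
    (n : R ⧸ I) = 0 ↔ (n : R) ∈ I := by
  rw [← map_natCast (Ideal.Quotient.mk I), Ideal.Quotient.eq_zero_iff_mem]

section FreeOverInt

variable {S : Type*} [CommRing S] [IsDedekindDomain S] [Module.Free ℤ S] [Module.Finite ℤ S]

theorem Ideal.card_units_quotient_div_absNorm {I : Ideal S} (hI : I ≠ ⊥) :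
    (Nat.card (S ⧸ I)ˣ : ℝ) / absNorm I =
      ∏ P ∈ (factors I).toFinset, ((absNorm P : ℝ) - 1) / absNorm P := by
  rw [absNorm_apply, Submodule.cardQuot_apply,
    IsDedekindDomain.card_units_quotient_eq_prod_factors hI,
    IsDedekindDomain.card_quotient_eq_prod_factors hI]
  push_cast
  rw [← Finset.prod_div_distrib]
  refine Finset.prod_congr rfl fun P hP => ?_
  have hP := Multiset.mem_toFinset.mp hP
  have := IsDedekindDomain.isMaximal_of_mem_factors hP
  have := (P ^ (factors I).count P).finiteQuotientOfFreeOfNeBot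
    (pow_ne_zero _ (prime_of_factor P hP).ne_zero)
  exact P.card_units_quotient_pow_div_card (Multiset.count_ne_zero.mpr hP)

theorem Ideal.ringChar_quotient_prime_and_mem (P : Ideal S) [P.IsMaximal] :
    (ringChar (S ⧸ P)).Prime ∧ (ringChar (S ⧸ P) : S) ∈ P := by
  obtain ⟨q, -, -, hqP, hq, -⟩ := P.exists_prime_and_absNorm_eq_pow
  rw [CharP.ringChar_of_prime_eq_zero hq (Quotient.natCast_eq_zero_iff_mem.mpr hqP)]
  exact ⟨hq, hqP⟩

theorem Ideal.dvd_absNorm_of_natCast_mem {P : Ideal S} [P.IsMaximal] {p : ℕ} (hp : p.Prime)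
    (hpP : (p : S) ∈ P) : p ∣ absNorm P := by
  obtain ⟨q, n, hn, hqP, hq, hnorm⟩ := P.exists_prime_and_absNorm_eq_pow
  have hpq : p = q :=
    (CharP.ringChar_of_prime_eq_zero hp (Quotient.natCast_eq_zero_iff_mem.mpr hpP)).symm.trans
      (CharP.ringChar_of_prime_eq_zero hq (Quotient.natCast_eq_zero_iff_mem.mpr hqP))
  rw [hnorm, hpq]
  exact dvd_pow_self q hn.ne'

theorem Ideal.card_le_finrank_of_natCast_mem {p : ℕ} (hp : p.Prime) {s : Finset (Ideal S)}
    (hs : ∀ P ∈ s, P.IsMaximal ∧ (p : S) ∈ P) : s.card ≤ finrank ℤ S := by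
  have hprod : ∏ P ∈ s, P ∣ span {(p : S)} :=
    Finset.prod_dvd_of_coprime
      (fun P hP Q hQ hne => isCoprime_iff_sup_eq.mpr ((hs P hP).1.coprime_of_ne (hs Q hQ).1 hne))
      (fun P hP => dvd_iff_le.mpr ((span_singleton_le_iff_mem _).mpr (hs P hP).2))
  have hnorm : p ^ s.card ∣ p ^ finrank ℤ S := calc
    p ^ s.card = ∏ _P ∈ s, p := (Finset.prod_const p).symm
    _ ∣ ∏ P ∈ s, absNorm P := Finset.prod_dvd_prod_of_dvd _ _ fun P hP =>
      have := (hs P hP).1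
      dvd_absNorm_of_natCast_mem hp (hs P hP).2
    _ = absNorm (∏ P ∈ s, P) := (map_prod absNorm _ _).symm
    _ ∣ p ^ finrank ℤ S := absNorm_span_natCast (S := S) p ▸ map_dvd absNorm hprod
  exact (Nat.pow_dvd_pow_iff_le_right hp.one_lt).mp hnorm

theorem Ideal.prod_primes_sub_one_div_pow_finrank_le {I : Ideal S} (hI : I ≠ ⊥) :
    ∏ p ∈ (Finset.range (absNorm I + 1)).filter Nat.Prime, (((p : ℝ) - 1) / p) ^ finrank ℤ S ≤
      ∏ P ∈ (factors I).toFinset, ((absNorm P : ℝ) - 1) / absNorm P := by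
  classical
  set F := (factors I).toFinset
  have hmax (P) (hP : P ∈ F) : P.IsMaximal :=
    IsDedekindDomain.isMaximal_of_mem_factors (Multiset.mem_toFinset.mp hP)
  have hchar (P) (hP : P ∈ F) : (ringChar (S ⧸ P)).Prime ∧ (ringChar (S ⧸ P) : S) ∈ P :=
    have := hmax P hP
    P.ringChar_quotient_prime_and_mem
  have hchar_dvd (P) (hP : P ∈ F) : ringChar (S ⧸ P) ∣ absNorm P :=
    have := hmax P hP
    dvd_absNorm_of_natCast_mem (hchar P hP).1 (hchar P hP).2
  have hI_pos : 0 < absNorm I := Nat.pos_of_ne_zero (absNorm_eq_zero_iff.not.mpr hI)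
  have hnorm_dvd (P) (hP : P ∈ F) : absNorm P ∣ absNorm I :=
    map_dvd absNorm (dvd_of_mem_factors (Multiset.mem_toFinset.mp hP))
  have hmaps (P) (hP : P ∈ F) :
      ringChar (S ⧸ P) ∈ (Finset.range (absNorm I + 1)).filter Nat.Prime :=
    Finset.mem_filter.mpr ⟨Finset.mem_range_succ_iff.mpr
      (Nat.le_of_dvd hI_pos ((hchar_dvd P hP).trans (hnorm_dvd P hP))), (hchar P hP).1⟩
  calc ∏ p ∈ (Finset.range (absNorm I + 1)).filter Nat.Prime, (((p : ℝ) - 1) / p) ^ finrank ℤ S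
      ≤ ∏ p ∈ (Finset.range (absNorm I + 1)).filter Nat.Prime,
          ∏ P ∈ F with ringChar (S ⧸ P) = p, ((ringChar (S ⧸ P) : ℝ) - 1) / ringChar (S ⧸ P) := by
        refine Finset.prod_le_prod (fun p hp => ?_) (fun p hp => ?_)
        · have hp := (Finset.mem_filter.mp hp).2
          exact pow_nonneg (sub_one_div_self_nonneg (by exact_mod_cast hp.one_lt.le)) _
        · have hp := (Finset.mem_filter.mp hp).2
          rw [Finset.prod_congr rfl fun P hP => by rw [(Finset.mem_filter.mp hP).2],
            Finset.prod_const]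
          refine pow_le_pow_of_le_one (sub_one_div_self_nonneg (by exact_mod_cast hp.one_lt.le))
            (sub_one_div_self_le_one (Nat.cast_nonneg p))
            (card_le_finrank_of_natCast_mem hp fun P hP => ?_)
          obtain ⟨hPF, rfl⟩ := Finset.mem_filter.mp hP
          exact ⟨hmax P hPF, (hchar P hPF).2⟩
    _ = ∏ P ∈ F, ((ringChar (S ⧸ P) : ℝ) - 1) / ringChar (S ⧸ P) :=
        Finset.prod_fiberwise_of_maps_to hmaps _
    _ ≤ ∏ P ∈ F, ((absNorm P : ℝ) - 1) / absNorm P := by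
        refine Finset.prod_le_prod (fun P hP => ?_) (fun P hP => ?_)
        · exact sub_one_div_self_nonneg (by exact_mod_cast (hchar P hP).1.one_lt.le)
        · exact sub_one_div_self_le_sub_one_div_self (by exact_mod_cast (hchar P hP).1.pos)
            (by exact_mod_cast
              Nat.le_of_dvd (Nat.pos_of_dvd_of_pos (hnorm_dvd P hP) hI_pos) (hchar_dvd P hP))

end FreeOverInt

theorem one_le_tsum_pnat_one_div_pow {k : ℕ} (hk : 2 ≤ k) : 1 ≤ ∑' n : ℕ+, 1 / (n : ℝ) ^ k := by
  have hsum : Summable fun n : ℕ+ => 1 / (n : ℝ) ^ k :=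
    (Real.summable_one_div_nat_pow.mpr hk).comp_injective PNat.coe_injective
  simpa using hsum.le_tsum 1 fun n _ => by positivity

theorem prod_inv_tsum_pnat_one_div_pow_le_one (d m : ℕ) :
    ∏ k ∈ Finset.Icc 2 d, ((∑' n : ℕ+, 1 / (n : ℝ) ^ k)⁻¹) ^ m ≤ 1 :=
  Finset.prod_le_one (fun k _ => by positivity) fun k hk =>
    pow_le_one₀ (by positivity) (inv_le_one_of_one_le₀
      (one_le_tsum_pnat_one_div_pow (Finset.mem_Icc.mp hk).1))

/-- Let `𝔬` be the ring of integers of a number field of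
degree `d` and `y ∈ 𝔬` nonzero. Then
`φ(y)/|N(y)| ≥ ζ(2)^{-d}⋯ζ(d)^{-d} · ∏_{p ≤ |N(y)|} ((p-1)/p)^d`,
the product being over rational primes, where `ζ(k) = ∑_{n≥1} n^{-k}`. -/
theorem stmt_11 (K : Type) [Field K] [NumberField K] (y : 𝓞 K) (hy : y ≠ 0) :
    (Nat.card ((𝓞 K ⧸ Ideal.span {y})ˣ) : ℝ) / ((Algebra.norm ℤ y).natAbs : ℝ) ≥
      (∏ k ∈ Finset.Icc 2 (Module.finrank ℚ K),
        ((∑' n : ℕ+, (1 : ℝ) / (n : ℝ) ^ k)⁻¹) ^ (Module.finrank ℚ K)) *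
      ∏ p ∈ (Finset.range ((Algebra.norm ℤ y).natAbs + 1)).filter Nat.Prime,
        (((p : ℝ) - 1) / (p : ℝ)) ^ (Module.finrank ℚ K) := by
  have hI : span {y} ≠ ⊥ := by rwa [Ne, span_singleton_eq_bot]
  rw [ge_iff_le, ← absNorm_span_singleton, ← RingOfIntegers.rank,
    Ideal.card_units_quotient_div_absNorm hI]
  refine (mul_le_of_le_one_left ?_ (prod_inv_tsum_pnat_one_div_pow_le_one _ _)).trans
    (Ideal.prod_primes_sub_one_div_pow_finrank_le hI)
  exact Finset.prod_nonneg fun p hp => pow_nonneg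
    (sub_one_div_self_nonneg (by exact_mod_cast (Finset.mem_filter.mp hp).2.one_lt.le)) _
end
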